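/- arXiv:1710.09723 — 5 statements merged into one kernel-verified Lean document; each statement's English description precedes it below -/
import Mathlib

section
/- Let B be a Fell bundle over an inverse semigroup S, and let L(B) = ⊕_{s∈S} B_s with multiplication (b_s δ_s)(b_t δ_t) = μ_{s,t}(b_s ⊗ b_t) δ_{st}. Then the linear subspace N of L(B) spanned by elements of the form b_s δ_s − j_{t,s}(b_s) δ_t, for s ≤ t and b_s ∈ B_s, is a two-sided ideal of L(B). -/
/-- An inverse semigroup: a semigroup with an involution `star` such that
`a (star a) a = a`, `(star a) a (star a) = star a`, and idempotents commute. -/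
class InverseSemigroup (S : Type*) extends Semigroup S, Star S where
  star_star : ∀ a : S, star (star a) = a
  mul_star_mul : ∀ a : S, a * star a * a = a
  star_mul_star : ∀ a : S, star a * a * star a = star a
  star_mul : ∀ a b : S, star (a * b) = star b * star a
  idem_comm : ∀ e f : S, e * e = e → f * f = f → e * f = f * e

/-- The natural partial order on an inverse semigroup: `s ≤ t` iff `s = t e`
for some idempotent `e`. -/
def ISle {S : Type*} [InverseSemigroup S] (s t : S) : Prop :=
  ∃ e : S, e * e = e ∧ s = t * e

/-- A Fell bundle over an inverse semigroup `S`, over the field `K`: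
`K`-vector spaces `B s`, bilinear multiplication maps `μ s t : B s → B t → B (s*t)`
(given here in curried bilinear form, equivalent to linear maps on the tensor
product), and injective linear inclusion maps `j s t : B s → B t` for `s ≤ t`,
subject to associativity, spanning, functoriality and compatibility axioms. -/
structure FellBundle (K S : Type*) [Field K] [InverseSemigroup S] where
  B : S → Type*
  [addCommGroup : ∀ s, AddCommGroup (B s)]
  [module : ∀ s, Module K (B s)]
  μ : ∀ s t : S, B s →ₗ[K] B t →ₗ[K] B (s * t)
  j : ∀ s t : S, ISle s t → (B s →ₗ[K] B t)
  j_injective : ∀ (s t : S) (h : ISle s t), Function.Injective (j s t h)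
  assoc : ∀ (r s t : S) (a : B r) (b : B s) (c : B t),
    μ (r * s) t (μ r s a b) c =
      cast (congrArg B (mul_assoc r s t)).symm (μ r (s * t) a (μ s t b c))
  spanning : ∀ s : S, Submodule.span K
      {x : B s | ∃ (a : B s) (b : B (star s)) (c : B s),
        x = cast (congrArg B (by
              have h1 : s * star s * s = s := InverseSemigroup.mul_star_mul s
              calc s * star s * s = s := h1))
            (μ (s * star s) s (μ s (star s) a b) c)} = ⊤
  j_comp : ∀ (r s t : S) (h1 : ISle r s) (h2 : ISle s t) (h3 : ISle r t),
    j r t h3 = (j s t h2).comp (j r s h1)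
  j_mul : ∀ (r r' s s' : S) (h1 : ISle r r') (h2 : ISle s s')
    (h3 : ISle (r * s) (r' * s')) (a : B r) (b : B s),
    j (r * s) (r' * s') h3 (μ r s a b) = μ r' s' (j r r' h1 a) (j s s' h2 b)

attribute [instance] FellBundle.addCommGroup FellBundle.module

open DirectSum

/-- The multiplication on `L(B) = ⊕_{s ∈ S} B s`, determined by
`(b δ_s)(c δ_t) = μ s t b c δ_{s t}`, as a bilinear map. -/
noncomputable def FellBundle.mulL {K S : Type*} [Field K] [InverseSemigroup S]
    [DecidableEq S] (FB : FellBundle K S) :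
    (⨁ s, FB.B s) →ₗ[K] (⨁ s, FB.B s) →ₗ[K] (⨁ s, FB.B s) :=
  DirectSum.toModule K S _ fun s =>
    { toFun := fun b => DirectSum.toModule K S _ fun t =>
        (DirectSum.lof K S FB.B (s * t)).comp (FB.μ s t b)
      map_add' := by
        intro b b'
        refine DirectSum.linearMap_ext K fun t => ?_
        ext c
        simp [DirectSum.toModule_lof]
      map_smul' := by
        intro r b
        refine DirectSum.linearMap_ext K fun t => ?_
        ext c
        simp [DirectSum.toModule_lof] }

section Aux

variable {K S : Type*} [Field K] [InverseSemigroup S] [DecidableEq S]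

lemma ISle_refl (u : S) : ISle u u :=
  ⟨star u * u, by
    have h := InverseSemigroup.mul_star_mul u
    calc (star u * u) * (star u * u) = star u * (u * star u * u) := by
          simp [mul_assoc]
      _ = star u * u := by rw [h],
   by
    have h := InverseSemigroup.mul_star_mul u
    calc u = u * star u * u := h.symm
      _ = u * (star u * u) := by rw [mul_assoc]⟩

lemma ISle_mul_right {s t : S} (u : S) (h : ISle s t) : ISle (s * u) (t * u) := by
  obtain ⟨e, he, hse⟩ := h
  have hf : (u * star u) * (u * star u) = u * star u := by
    calc (u * star u) * (u * star u) = (u * star u * u) * star u := by simp [mul_assoc]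
      _ = u * star u := by rw [InverseSemigroup.mul_star_mul]
  have hcomm : e * (u * star u) = (u * star u) * e :=
    InverseSemigroup.idem_comm e (u * star u) he hf
  refine ⟨star u * e * u, ?_, ?_⟩
  · calc (star u * e * u) * (star u * e * u)
        = star u * (e * (u * star u)) * (e * u) := by simp [mul_assoc]
      _ = star u * ((u * star u) * e) * (e * u) := by rw [hcomm]
      _ = (star u * u * star u) * (e * e) * u := by simp [mul_assoc]
      _ = star u * e * u := by rw [InverseSemigroup.star_mul_star, he]
  · have key : e * (u * star u) * u = e * u := by
      rw [mul_assoc, InverseSemigroup.mul_star_mul]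
    calc s * u = t * (e * u) := by rw [hse, mul_assoc]
      _ = t * (e * (u * star u) * u) := by rw [key]
      _ = t * ((u * star u) * e * u) := by rw [hcomm]
      _ = t * u * (star u * e * u) := by simp [mul_assoc]

lemma ISle_mul_left {s t : S} (u : S) (h : ISle s t) : ISle (u * s) (u * t) := by
  obtain ⟨e, he, hse⟩ := h
  exact ⟨e, he, by rw [hse, mul_assoc]⟩

lemma j_refl (FB : FellBundle K S) (u : S) (h : ISle u u) :
    FB.j u u h = LinearMap.id := by
  have hcomp := FB.j_comp u u u h h h
  ext x
  have : FB.j u u h (FB.j u u h x) = FB.j u u h x := by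
    conv_rhs => rw [hcomp]
    rfl
  simpa using FB.j_injective u u h this

lemma mulL_lof (FB : FellBundle K S) (s u : S) (b : FB.B s) (c : FB.B u) :
    FB.mulL (DirectSum.lof K S FB.B s b) (DirectSum.lof K S FB.B u c) =
      DirectSum.lof K S FB.B (s * u) (FB.μ s u b c) := by
  simp [FellBundle.mulL, DirectSum.toModule_lof]

lemma mem_right (FB : FellBundle K S) (s t : S) (h : ISle s t) (b : FB.B s)
    (u : S) (c : FB.B u) :
    FB.mulL (DirectSum.lof K S FB.B s b - DirectSum.lof K S FB.B t (FB.j s t h b))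
        (DirectSum.lof K S FB.B u c) ∈ Submodule.span K
      {x : ⨁ s, FB.B s | ∃ (s t : S) (h : ISle s t) (b : FB.B s),
        x = DirectSum.lof K S FB.B s b - DirectSum.lof K S FB.B t (FB.j s t h b)} := by
  have h3 := ISle_mul_right u h
  rw [map_sub, LinearMap.sub_apply, mulL_lof, mulL_lof]
  refine Submodule.subset_span ⟨s * u, t * u, h3, FB.μ s u b c, ?_⟩
  rw [FB.j_mul s t u u h (ISle_refl u) h3 b c, j_refl]
  rfl

lemma mem_left (FB : FellBundle K S) (s t : S) (h : ISle s t) (b : FB.B s)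
    (u : S) (c : FB.B u) :
    FB.mulL (DirectSum.lof K S FB.B u c)
        (DirectSum.lof K S FB.B s b - DirectSum.lof K S FB.B t (FB.j s t h b))
      ∈ Submodule.span K
      {x : ⨁ s, FB.B s | ∃ (s t : S) (h : ISle s t) (b : FB.B s),
        x = DirectSum.lof K S FB.B s b - DirectSum.lof K S FB.B t (FB.j s t h b)} := by
  have h3 := ISle_mul_left u h
  rw [map_sub, mulL_lof, mulL_lof]
  refine Submodule.subset_span ⟨u * s, u * t, h3, FB.μ u s c b, ?_⟩
  rw [FB.j_mul u u s t (ISle_refl u) h h3 c b, j_refl]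
  rfl

end Aux

/-- The linear subspace `N` of `L(B) = ⊕_{s ∈ S} B s` spanned by
the elements `b δ_s − j t s b δ_t`, for `s ≤ t` and `b ∈ B s`, is a two-sided
ideal of `L(B)` (with the multiplication `(b δ_s)(c δ_t) = μ s t b c δ_{s t}`). -/
theorem redundancy_subspace_is_two_sided_ideal
    {K S : Type*} [Field K] [InverseSemigroup S] [DecidableEq S]
    (FB : FellBundle K S) :
    ∀ x ∈ Submodule.span K
      {x : ⨁ s, FB.B s | ∃ (s t : S) (h : ISle s t) (b : FB.B s),
        x = DirectSum.lof K S FB.B s b - DirectSum.lof K S FB.B t (FB.j s t h b)},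
    ∀ y : ⨁ s, FB.B s,
      FB.mulL x y ∈ Submodule.span K
        {x : ⨁ s, FB.B s | ∃ (s t : S) (h : ISle s t) (b : FB.B s),
          x = DirectSum.lof K S FB.B s b - DirectSum.lof K S FB.B t (FB.j s t h b)} ∧
      FB.mulL y x ∈ Submodule.span K
        {x : ⨁ s, FB.B s | ∃ (s t : S) (h : ISle s t) (b : FB.B s),
          x = DirectSum.lof K S FB.B s b - DirectSum.lof K S FB.B t (FB.j s t h b)} := by
  intro x hx y
  set Gen : Set (⨁ s, FB.B s) :=
    {x : ⨁ s, FB.B s | ∃ (s t : S) (h : ISle s t) (b : FB.B s),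
      x = DirectSum.lof K S FB.B s b - DirectSum.lof K S FB.B t (FB.j s t h b)} with hGen
  set N := Submodule.span K Gen with hN
  have gen_right : ∀ g ∈ Gen, ∀ y : ⨁ s, FB.B s, FB.mulL g y ∈ N := by
    rintro g ⟨s, t, h, b, rfl⟩ y
    induction y using DirectSum.induction_on with
    | zero => simp
    | of u c =>
        rw [← DirectSum.lof_eq_of K]
        exact mem_right FB s t h b u c
    | add y₁ y₂ hy₁ hy₂ =>
        rw [map_add]
        exact N.add_mem hy₁ hy₂
  have gen_left : ∀ g ∈ Gen, ∀ y : ⨁ s, FB.B s, FB.mulL y g ∈ N := by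
    rintro g ⟨s, t, h, b, rfl⟩ y
    induction y using DirectSum.induction_on with
    | zero => simp
    | of u c =>
        rw [← DirectSum.lof_eq_of K]
        exact mem_left FB s t h b u c
    | add y₁ y₂ hy₁ hy₂ =>
        rw [map_add, LinearMap.add_apply]
        exact N.add_mem hy₁ hy₂
  constructor
  · have : N ≤ N.comap (FB.mulL.flip y) := by
      rw [hN, Submodule.span_le]
      intro g hg
      simpa [Submodule.mem_comap] using gen_right g hg y
    simpa [Submodule.mem_comap] using this hx
  · have : N ≤ N.comap (FB.mulL y) := by
      rw [hN, Submodule.span_le]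
      intro g hg
      simpa [Submodule.mem_comap] using gen_left g hg y
    simpa [Submodule.mem_comap] using this hx
end

section
/- Let α be an action of an inverse semigroup S on a K-algebra A (a semigroup homomorphism s ↦ α_s where each α_s is an algebra isomorphism from the ideal A_{s*s} onto A_{ss*}, and the ideals A_e span A). Then the semi-direct product triple ({B_s}, {μ_{s,t}}, {j_{t,s}}), where B_s = {(a,s) : a ∈ A_{ss*}} and μ_{s,t}(aδ_s ⊗ bδ_t) = α_s(α_{s*}(a)b)δ_{st}, is a Fell bundle over S if and only if for each s ∈ S the ideal A_{ss*} is idempotent (i.e., spanned by products of pairs of its elements). -/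
/-- An action of an inverse semigroup `S` on a (possibly non-unital) `K`-algebra
`A`: a semigroup homomorphism `s ↦ α s` into the inverse semigroup of partial
bijections of `A` (composed with largest domains, encoded via
`PartialEquiv.trans` and `EqOnSource`), with `α (star s) = (α s).symm`, such
that each domain is a two-sided ideal which is also a `K`-subspace, each `α s`
is an algebra isomorphism onto its range, and the domains span `A`. -/
structure AlgAction (K : Type*) (S : Type*) (A : Type*) [Field K]
    [InverseSemigroup S] [NonUnitalRing A] [Module K A]
    [SMulCommClass K A A] [IsScalarTower K A A] where
  α : S → PartialEquiv A A
  hom : ∀ s t : S, (α (s * t)).EqOnSource ((α t).trans (α s))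
  star_eq : ∀ s : S, (α (star s)).EqOnSource (α s).symm
  source_ideal : ∀ s : S, ∃ M : Submodule K A, (M : Set A) = (α s).source ∧
    ∀ a ∈ M, ∀ b : A, a * b ∈ M ∧ b * a ∈ M
  map_add : ∀ s : S, ∀ a ∈ (α s).source, ∀ b ∈ (α s).source,
    α s (a + b) = α s a + α s b
  map_smul : ∀ s : S, ∀ c : K, ∀ a ∈ (α s).source, α s (c • a) = c • α s a
  map_mul : ∀ s : S, ∀ a ∈ (α s).source, ∀ b ∈ (α s).source,
    α s (a * b) = α s a * α s b
  span_domains : Submodule.span K (⋃ s : S, (α s).source) = ⊤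

namespace AlgAction
set_option linter.unusedSectionVars false

variable {K S A : Type*} [Field K] [InverseSemigroup S] [NonUnitalRing A] [Module K A]
  [SMulCommClass K A A] [IsScalarTower K A A] (act : AlgAction K S A)


lemma es_source {e e' : PartialEquiv A A} (h : e.EqOnSource e') : e.source = e'.source :=
  PartialEquiv.EqOnSource.source_eq h

lemma es_target {e e' : PartialEquiv A A} (h : e.EqOnSource e') : e.target = e'.target :=
  PartialEquiv.EqOnSource.target_eq h

lemma es_eqOn {e e' : PartialEquiv A A} (h : e.EqOnSource e') {x : A} (hx : x ∈ e.source) :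
    e x = e' x :=
  PartialEquiv.EqOnSource.eqOn h hx

lemma es_symm {e e' : PartialEquiv A A} (h : e.EqOnSource e') : e.symm.EqOnSource e'.symm :=
  PartialEquiv.EqOnSource.symm' h

lemma hom' (s t : S) : (act.α (s * t)).EqOnSource ((act.α t).trans (act.α s)) := act.hom s t

lemma star_eq' (s : S) : (act.α (star s)).EqOnSource (act.α s).symm := act.star_eq s

lemma source_star (s : S) : (act.α (star s)).source = (act.α s).target := by
  rw [es_source (act.star_eq' s), PartialEquiv.symm_source]

lemma target_star (s : S) : (act.α (star s)).target = (act.α s).source := by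
  rw [es_target (act.star_eq' s), PartialEquiv.symm_target]

lemma star_apply (s : S) {a : A} (ha : a ∈ (act.α s).target) :
    act.α (star s) a = (act.α s).symm a :=
  es_eqOn (act.star_eq' s) (by rw [act.source_star]; exact ha)

lemma cancel_right (s : S) {a : A} (ha : a ∈ (act.α s).source) :
    act.α (star s) (act.α s a) = a := by
  rw [act.star_apply s ((act.α s).map_source ha), (act.α s).left_inv ha]

lemma cancel_left (s : S) {a : A} (ha : a ∈ (act.α s).target) :
    act.α s (act.α (star s) a) = a := by
  rw [act.star_apply s ha, (act.α s).right_inv ha]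

lemma star_mem (s : S) {a : A} (ha : a ∈ (act.α s).target) :
    act.α (star s) a ∈ (act.α s).source := by
  have h := (act.α (star s)).map_source (x := a) (by rw [act.source_star]; exact ha)
  rwa [act.target_star] at h

lemma comp_mem (s t : S) {x : A} (hx : x ∈ (act.α t).source)
    (hx2 : act.α t x ∈ (act.α s).source) : x ∈ (act.α (s * t)).source := by
  rw [es_source (act.hom' s t), PartialEquiv.trans_source]
  exact ⟨hx, hx2⟩

lemma comp_apply (s t : S) {x : A} (hx : x ∈ (act.α t).source)
    (hx2 : act.α t x ∈ (act.α s).source) :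
    act.α (s * t) x = act.α s (act.α t x) := by
  have h := es_eqOn (act.hom' s t) (act.comp_mem s t hx hx2)
  rwa [PartialEquiv.trans_apply] at h

lemma star_of_idem {e : S} (he : e * e = e) : star e = e := by
  have hef : (e * star e) * (e * star e) = e * star e := by
    rw [mul_assoc, ← mul_assoc (star e) e (star e), InverseSemigroup.star_mul_star]
  have hfe : (star e * e) * (star e * e) = star e * e := by
    rw [mul_assoc, ← mul_assoc e (star e) e, InverseSemigroup.mul_star_mul]
  have h1 : e * star e = e := by
    have h := InverseSemigroup.idem_comm e (e * star e) he hef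
    rw [← mul_assoc, he] at h
    rw [h, InverseSemigroup.mul_star_mul]
  have h2 : star e * e = e := by
    have h := InverseSemigroup.idem_comm (star e * e) e hfe he
    rw [mul_assoc, he, ← mul_assoc, InverseSemigroup.mul_star_mul] at h
    exact h
  calc star e = star e * e * star e := (InverseSemigroup.star_mul_star e).symm
    _ = e * star e := by rw [h2]
    _ = e := h1

lemma sts_source (s : S) : (act.α (star s * s)).source = (act.α s).source := by
  rw [AlgAction.es_source (act.hom' (star s) s), PartialEquiv.trans_source, act.source_star]
  exact Set.inter_eq_left.mpr fun x hx => (act.α s).map_source hx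

lemma sts_apply (s : S) {x : A} (hx : x ∈ (act.α s).source) :
    act.α (star s * s) x = x := by
  rw [act.comp_apply (star s) s hx (by rw [act.source_star]; exact (act.α s).map_source hx),
    act.cancel_right s hx]

lemma idem_apply {e : S} (he : e * e = e) {x : A} (hx : x ∈ (act.α e).source) :
    act.α e x = x := by
  have h := act.sts_apply e hx
  rwa [star_of_idem he, he] at h

lemma idem_target {e : S} (he : e * e = e) : (act.α e).target = (act.α e).source := by
  rw [← act.source_star e, star_of_idem he]

lemma idem_symm_apply {e : S} (he : e * e = e) {x : A} (hx : x ∈ (act.α e).source) :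
    (act.α e).symm x = x := by
  have hxt : x ∈ (act.α e).target := by rw [act.idem_target he]; exact hx
  have h1 : (act.α e).symm x ∈ (act.α e).source := (act.α e).map_target hxt
  have h2 := (act.α e).right_inv hxt
  rw [act.idem_apply he h1] at h2
  exact h2

lemma map_zero (s : S) : act.α s 0 = 0 := by
  obtain ⟨M, hM, -⟩ := act.source_ideal s
  have h0 : (0 : A) ∈ (act.α s).source := by rw [← hM]; exact M.zero_mem
  have h := act.map_add s 0 h0 0 h0
  rw [add_zero] at h
  exact left_eq_add.mp h

lemma source_mul_right (s : S) {y : A} (hy : y ∈ (act.α s).source) (z : A) :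
    y * z ∈ (act.α s).source := by
  obtain ⟨M, hM, hid⟩ := act.source_ideal s
  rw [← hM] at hy ⊢
  exact (hid y hy z).1

lemma source_mul_left (s : S) {y : A} (hy : y ∈ (act.α s).source) (z : A) :
    z * y ∈ (act.α s).source := by
  obtain ⟨M, hM, hid⟩ := act.source_ideal s
  rw [← hM] at hy ⊢
  exact (hid y hy z).2

lemma target_mul_right (s : S) {y : A} (hy : y ∈ (act.α s).target) (z : A) :
    y * z ∈ (act.α s).target := by
  rw [← act.source_star] at hy ⊢
  exact act.source_mul_right (star s) hy z

lemma target_mul_left (s : S) {y : A} (hy : y ∈ (act.α s).target) (z : A) :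
    z * y ∈ (act.α s).target := by
  rw [← act.source_star] at hy ⊢
  exact act.source_mul_left (star s) hy z

lemma target_zero (s : S) : (0 : A) ∈ (act.α s).target := by
  obtain ⟨M, hM, -⟩ := act.source_ideal (star s)
  rw [← act.source_star, ← hM]
  exact M.zero_mem

lemma target_add (s : S) {y z : A} (hy : y ∈ (act.α s).target) (hz : z ∈ (act.α s).target) :
    y + z ∈ (act.α s).target := by
  obtain ⟨M, hM, -⟩ := act.source_ideal (star s)
  rw [← act.source_star, ← hM] at hy hz ⊢
  exact M.add_mem hy hz

lemma target_smul (s : S) (k : K) {y : A} (hy : y ∈ (act.α s).target) :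
    k • y ∈ (act.α s).target := by
  obtain ⟨M, hM, -⟩ := act.source_ideal (star s)
  rw [← act.source_star, ← hM] at hy ⊢
  exact M.smul_mem k hy

lemma e_source (s : S) : (act.α (s * star s)).source = (act.α s).target := by
  have h := act.sts_source (star s)
  rwa [InverseSemigroup.star_star, act.source_star] at h

omit act in
lemma star_e (s : S) : star (s * star s) = s * star s := by
  rw [InverseSemigroup.star_mul, InverseSemigroup.star_star]

omit act in
lemma e_idem (s : S) : (s * star s) * (s * star s) = s * star s := by
  rw [mul_assoc, ← mul_assoc (star s) s (star s), InverseSemigroup.star_mul_star]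

lemma Bsimp (s : S) {a b c : A} (ha : a ∈ (act.α s).target)
    (hb : b ∈ (act.α (star s)).target) (hc : c ∈ (act.α s).target) :
    act.α (s * star s) (act.α (star (s * star s))
        (act.α s (act.α (star s) a * b)) * c)
      = act.α s (act.α (star s) a * b) * c ∧
    act.α s (act.α (star s) a * b) ∈ (act.α s).target := by
  have hy : act.α s (act.α (star s) a * b) ∈ (act.α s).target :=
    (act.α s).map_source (act.source_mul_right s (act.star_mem s ha) b)
  refine ⟨?_, hy⟩
  have hinner : act.α (s * star s) (act.α s (act.α (star s) a * b))
      = act.α s (act.α (star s) a * b) :=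
    act.idem_apply (e_idem (S := S) s) (by rw [act.e_source]; exact hy)
  rw [star_e s, hinner,
    act.idem_apply (e_idem (S := S) s)
      (by rw [act.e_source]; exact act.target_mul_right s hy c)]

lemma target_mono (t e : S) : (act.α (t * e)).target ⊆ (act.α t).target := by
  intro x hx
  have hx' : x ∈ ((act.α e).trans (act.α t)).target := by
    rw [← es_target (act.hom' t e)]; exact hx
  rw [PartialEquiv.trans_target] at hx'
  exact hx'.1

lemma key (s : S)
    (hidem : Submodule.span K
        {x : A | ∃ a ∈ (act.α s).target, ∃ b ∈ (act.α s).target, x = a * b}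
      = Submodule.span K ((act.α s).target))
    (x c : A) {b : A} (hb : b ∈ (act.α s).target) :
    act.α s (act.α (star s) (x * b) * c) = x * act.α s (act.α (star s) b * c) := by
  have hbspan : b ∈ Submodule.span K
      {x : A | ∃ a ∈ (act.α s).target, ∃ b ∈ (act.α s).target, x = a * b} := by
    rw [hidem]; exact Submodule.subset_span hb
  refine (Submodule.span_induction
    (p := fun b _ => b ∈ (act.α s).target ∧
      act.α s (act.α (star s) (x * b) * c) = x * act.α s (act.α (star s) b * c))
    ?_ ?_ ?_ ?_ hbspan).2
  · rintro y ⟨b₁, hb₁, b₂, hb₂, rfl⟩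
    have hxb₁ := act.target_mul_left s hb₁ x
    refine ⟨act.target_mul_right s hb₁ b₂, ?_⟩
    have h1 : act.α (star s) (x * (b₁ * b₂))
        = act.α (star s) (x * b₁) * act.α (star s) b₂ := by
      rw [← mul_assoc]
      exact act.map_mul (star s) _ (by rw [act.source_star]; exact hxb₁) _
        (by rw [act.source_star]; exact hb₂)
    have h2 : act.α (star s) (b₁ * b₂) = act.α (star s) b₁ * act.α (star s) b₂ :=
      act.map_mul (star s) _ (by rw [act.source_star]; exact hb₁) _
        (by rw [act.source_star]; exact hb₂)
    have hsb₂c := act.source_mul_right s (act.star_mem s hb₂) c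
    rw [h1, h2, mul_assoc, mul_assoc,
      act.map_mul s _ (act.star_mem s hxb₁) _ hsb₂c,
      act.map_mul s _ (act.star_mem s hb₁) _ hsb₂c,
      act.cancel_left s hxb₁, act.cancel_left s hb₁, mul_assoc]
  · exact ⟨act.target_zero s, by simp [act.map_zero]⟩
  · rintro y z hys hzs ⟨hyt, hye⟩ ⟨hzt, hze⟩
    refine ⟨act.target_add s hyt hzt, ?_⟩
    have h1 : act.α (star s) (x * (y + z))
        = act.α (star s) (x * y) + act.α (star s) (x * z) := by
      rw [mul_add]
      exact act.map_add (star s) _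
        (by rw [act.source_star]; exact act.target_mul_left s hyt x) _
        (by rw [act.source_star]; exact act.target_mul_left s hzt x)
    have h2 : act.α (star s) (y + z) = act.α (star s) y + act.α (star s) z :=
      act.map_add (star s) _ (by rw [act.source_star]; exact hyt) _
        (by rw [act.source_star]; exact hzt)
    rw [h1, h2, add_mul, add_mul,
      act.map_add s _
        (act.source_mul_right s (act.star_mem s (act.target_mul_left s hyt x)) c) _
        (act.source_mul_right s (act.star_mem s (act.target_mul_left s hzt x)) c),
      act.map_add s _ (act.source_mul_right s (act.star_mem s hyt) c) _
        (act.source_mul_right s (act.star_mem s hzt) c),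
      hye, hze, mul_add]
  · rintro k y hys ⟨hyt, hye⟩
    refine ⟨act.target_smul s k hyt, ?_⟩
    rw [mul_smul_comm,
      act.map_smul (star s) k _
        (by rw [act.source_star]; exact act.target_mul_left s hyt x),
      smul_mul_assoc,
      act.map_smul s k _
        (act.source_mul_right s (act.star_mem s (act.target_mul_left s hyt x)) c),
      act.map_smul (star s) k _ (by rw [act.source_star]; exact hyt),
      smul_mul_assoc,
      act.map_smul s k _ (act.source_mul_right s (act.star_mem s hyt) c),
      hye, mul_smul_comm]

end AlgAction

/-- Given an action `α` of an inverse semigroup `S` on a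
`K`-algebra `A`, the semi-direct product triple — with fibers
`B s = A_{s s*} = (α s).target`, multiplication
`μ s t (a δ_s ⊗ b δ_t) = α s (α (star s) a * b) δ_{s t}` and inclusions
`j t s (a δ_s) = a δ_t` for `s ≤ t` — is a Fell bundle over `S` if and only if
each ideal `A_{s s*}` is idempotent, i.e. spanned by products of pairs of its
elements.  The Fell bundle axioms are spelled out elementwise: (A) is axiom (i)
(associativity), (B) is axiom (ii) (spanning), (C) says the inclusion maps `j`
are defined (which, the `j` being restrictions of the identity of `A`, also
gives axiom (iii)), and (D) is axiom (iv) (compatibility of `μ` with `j`). -/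
theorem semidirect_product_is_fell_bundle_iff_ideals_idempotent
    {K S A : Type*} [Field K] [InverseSemigroup S] [NonUnitalRing A] [Module K A]
    [SMulCommClass K A A] [IsScalarTower K A A] (act : AlgAction K S A) :
    ((∀ r s t : S, ∀ a ∈ (act.α r).target, ∀ b ∈ (act.α s).target,
        ∀ c ∈ (act.α t).target,
        act.α (r * s) (act.α (star (r * s))
            (act.α r (act.α (star r) a * b)) * c) =
          act.α r (act.α (star r) a * act.α s (act.α (star s) b * c)) ) ∧
      (∀ s : S, Submodule.span K
          {x : A | ∃ a ∈ (act.α s).target, ∃ b ∈ (act.α (star s)).target,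
            ∃ c ∈ (act.α s).target,
            x = act.α (s * star s) (act.α (star (s * star s))
                  (act.α s (act.α (star s) a * b)) * c)} =
        Submodule.span K ((act.α s).target) ) ∧
      (∀ s t : S, ISle s t → (act.α s).target ⊆ (act.α t).target) ∧
      (∀ r r' s s' : S, ISle r r' → ISle s s' →
        ∀ a ∈ (act.α r).target, ∀ b ∈ (act.α s).target,
        act.α r (act.α (star r) a * b) = act.α r' (act.α (star r') a * b)))
    ↔
    (∀ s : S, Submodule.span K
        {x : A | ∃ a ∈ (act.α s).target, ∃ b ∈ (act.α s).target, x = a * b} =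
      Submodule.span K ((act.α s).target)) := by
  constructor
  · rintro ⟨-, hB, -, -⟩ s
    apply le_antisymm
    · refine Submodule.span_le.mpr ?_
      rintro x ⟨a, ha, b, hb, rfl⟩
      exact Submodule.subset_span (act.target_mul_right s ha b)
    · rw [← hB s]
      refine Submodule.span_le.mpr ?_
      rintro x ⟨a, ha, b, hb, c, hc, rfl⟩
      obtain ⟨heq, hy⟩ := act.Bsimp s ha hb hc
      rw [heq]
      exact Submodule.subset_span ⟨_, hy, c, hc, rfl⟩
  · intro hidem
    refine ⟨?_, ?_, ?_, ?_⟩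
    · intro r s t a ha b hb c hc
      have hx : act.α (star r) a ∈ (act.α r).source := act.star_mem r ha
      have hxb : act.α (star r) a * b ∈ (act.α s).target := act.target_mul_left s hb _
      have hxbr : act.α (star r) a * b ∈ (act.α r).source := act.source_mul_right r hx b
      have hu : act.α r (act.α (star r) a * b) ∈ (act.α r).target :=
        (act.α r).map_source hxbr
      have h1 : act.α (star (r * s)) (act.α r (act.α (star r) a * b))
          = act.α (star s) (act.α (star r) a * b) := by
        rw [InverseSemigroup.star_mul,
          act.comp_apply (star s) (star r)
            (by rw [act.source_star]; exact hu)
            (by rw [act.cancel_right r hxbr, act.source_star]; exact hxb),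
          act.cancel_right r hxbr]
      rw [h1]
      have hkey := act.key s (hidem s) (act.α (star r) a) c hb
      have hmem1 : act.α (star s) (act.α (star r) a * b) * c ∈ (act.α s).source :=
        act.source_mul_right s (act.star_mem s hxb) c
      have hmem2 : act.α s (act.α (star s) (act.α (star r) a * b) * c)
          ∈ (act.α r).source := by
        rw [hkey]; exact act.source_mul_right r hx _
      rw [act.comp_apply r s hmem1 hmem2, hkey]
    · intro s
      apply le_antisymm
      · refine Submodule.span_le.mpr ?_
        rintro x ⟨a, ha, b, hb, c, hc, rfl⟩
        obtain ⟨heq, hy⟩ := act.Bsimp s ha hb hc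
        rw [heq]
        exact Submodule.subset_span (act.target_mul_right s hy c)
      · rw [← hidem s]
        refine Submodule.span_le.mpr ?_
        rintro x ⟨u, hu, v, hv, rfl⟩
        have huspan : u ∈ Submodule.span K
            {x : A | ∃ a ∈ (act.α s).target, ∃ b ∈ (act.α s).target, x = a * b} := by
          rw [hidem s]; exact Submodule.subset_span hu
        refine Submodule.span_induction
          (p := fun u _ => u * v ∈ Submodule.span K
            {x : A | ∃ a ∈ (act.α s).target, ∃ b ∈ (act.α (star s)).target,
              ∃ c ∈ (act.α s).target,
              x = act.α (s * star s) (act.α (star (s * star s))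
                    (act.α s (act.α (star s) a * b)) * c)})
          ?_ ?_ ?_ ?_ huspan
        · rintro w ⟨u₁, hu₁, u₂, hu₂, rfl⟩
          have hb' : act.α (star s) u₂ ∈ (act.α (star s)).target :=
            (act.α (star s)).map_source (by rw [act.source_star]; exact hu₂)
          refine Submodule.subset_span ⟨u₁, hu₁, act.α (star s) u₂, hb', v, hv, ?_⟩
          obtain ⟨heq, -⟩ := act.Bsimp s hu₁ hb' hv
          rw [heq, ← act.map_mul (star s) u₁ (by rw [act.source_star]; exact hu₁) u₂
            (by rw [act.source_star]; exact hu₂),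
            act.cancel_left s (act.target_mul_right s hu₁ u₂)]
        · simpa using Submodule.zero_mem _
        · intro y z hys hzs hy hz
          simpa [add_mul] using Submodule.add_mem _ hy hz
        · intro k y hys hy
          simpa [smul_mul_assoc] using Submodule.smul_mem _ k hy
    · intro s t hle
      obtain ⟨e, he, rfl⟩ : ∃ e : S, e * e = e ∧ s = t * e := hle
      exact act.target_mono t e
    · intro r r' s s' hler hles a ha b hb
      obtain ⟨e, he, rfl⟩ : ∃ e : S, e * e = e ∧ r = r' * e := hler
      have ha' : a ∈ (act.α r').target := act.target_mono r' e ha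
      have hq : (act.α r').symm a ∈ (act.α r').source := (act.α r').map_target ha'
      have hmemtrans : a ∈ ((act.α e).trans (act.α r')).symm.source := by
        rw [← AlgAction.es_source (AlgAction.es_symm (act.hom' r' e)),
          PartialEquiv.symm_source]
        exact ha
      have htq : (act.α r').symm a ∈ (act.α e).target := by
        have h := hmemtrans
        rw [PartialEquiv.trans_symm_eq_symm_trans_symm, PartialEquiv.trans_source] at h
        have h2 := h.2
        rw [Set.mem_preimage, PartialEquiv.symm_source] at h2
        exact h2
      have hp : act.α (star (r' * e)) a = act.α (star r') a := by
        rw [act.star_apply (r' * e) ha, act.star_apply r' ha']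
        have heqq := AlgAction.es_eqOn (AlgAction.es_symm (act.hom' r' e))
          (x := a) (by rw [PartialEquiv.symm_source]; exact ha)
        rw [PartialEquiv.trans_symm_eq_symm_trans_symm, PartialEquiv.trans_apply] at heqq
        rw [act.idem_symm_apply he (by rw [← act.idem_target he]; exact htq)] at heqq
        exact heqq
      rw [hp]
      have hps : act.α (star r') a ∈ (act.α r').source := by
        rw [act.star_apply r' ha']; exact hq
      have hpmem_r' : act.α (star r') a * b ∈ (act.α r').source :=
        act.source_mul_right r' hps b
      have hpe : act.α (star r') a * b ∈ (act.α e).source := by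
        have hqe : act.α (star r') a ∈ (act.α e).source := by
          rw [act.star_apply r' ha', ← act.idem_target he]
          exact htq
        exact act.source_mul_right e hqe b
      rw [act.comp_apply r' e hpe (by rw [act.idem_apply he hpe]; exact hpmem_r'),
        act.idem_apply he hpe]
end

section
/- Let (θ, S, X) be an ample dynamical system and (π, σ) a covariant representation on a vector space V. Define for each s ∈ S a map π_s(f δ_s) = π(f) σ_s for f ∈ L_c(X_{ss*}). Then {π_s}_{s∈S} is a non-degenerate representation of the semi-direct product Fell bundle B^θ on V; in particular π_{st}(μ_{s,t}(f δ_s ⊗ g δ_t)) = π_s(f δ_s) π_t(g δ_t) and π_t ∘ j_{t,s} = π_s whenever s ≤ t. -/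
/-- An ample action of an inverse semigroup `S` on a topological space `X`:
a semigroup homomorphism `s ↦ θ s` into partial homeomorphisms between clopen
subsets of `X` (composition with largest domains encoded via
`PartialEquiv.trans` and `EqOnSource`), with `θ (star s) = (θ s).symm`, whose
domains cover `X`.  (For an ample dynamical system, `X` is moreover assumed
locally compact, Hausdorff and totally disconnected.) -/
structure AmpleSystem (S X : Type*) [InverseSemigroup S] [TopologicalSpace X] where
  θ : S → PartialHomeomorph X X
  hom : ∀ s t : S, (θ (s * t)).toPartialEquiv.EqOnSource
    ((θ t).toPartialEquiv.trans (θ s).toPartialEquiv)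
  star_eq : ∀ s : S, (θ (star s)).toPartialEquiv.EqOnSource (θ s).toPartialEquiv.symm
  clopen : ∀ s : S, IsClopen (θ s).source
  cover : ∀ x : X, ∃ s : S, x ∈ (θ s).source

variable (K : Type*) [Field K]

/-- `L_c(X)`: the locally constant, compactly supported `K`-valued functions
on `X` (a non-unital commutative `K`-algebra under pointwise operations). -/
def LcSet (X : Type*) [TopologicalSpace X] : Set (X → K) :=
  {f | IsLocallyConstant f ∧ HasCompactSupport f}

variable {S X : Type*} [InverseSemigroup S] [TopologicalSpace X]

/-- The globally defined endomorphism `ᾱ_s` of `L_c(X)`: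
`ᾱ_s(f) = α_s(f · 1_{X_{s*s}})`, i.e. `(ᾱ_s f)(x) = f (θ_{s*} x)` for
`x ∈ X_{s s*}` and `0` otherwise. -/
noncomputable def barAlpha (T : AmpleSystem S X) (s : S) (f : X → K) : X → K :=
  (T.θ s).target.indicator (fun x => f ((T.θ s).symm x))

/-- The fiber `B_s = L_c(X_{s s*})` of the semi-direct product bundle:
elements of `L_c(X)` vanishing outside `X_{s s*} = ran θ_s`. -/
def FibSet (T : AmpleSystem S X) (s : S) : Set (X → K) :=
  {f | f ∈ LcSet K X ∧ ∀ x ∉ (T.θ s).target, f x = 0}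

/-- `L_c(X_e)` for an idempotent `e`: elements of `L_c(X)` vanishing outside
`X_e = dom θ_e`. -/
def LcE (T : AmpleSystem S X) (e : S) : Set (X → K) :=
  {f | f ∈ LcSet K X ∧ ∀ x ∉ (T.θ e).source, f x = 0}

/-- A covariant representation `(π, σ)` of an ample dynamical system
`(θ, S, X)` on a `K`-vector space `V`: a non-degenerate representation `π` of
`L_c(X)` and a semigroup homomorphism `σ : S → End(V)` with
`π (α_s f) = σ_s π(f) σ_{s*}` for `f ∈ L_c(X_{s*s})`, and
`span {π(f) ξ : f ∈ L_c(X_e)} = σ_e(V)` for each idempotent `e`.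
(`π` is recorded as a map on all of `X → K`; only its values on `L_c(X)` are
constrained.) -/
structure CovRep (T : AmpleSystem S X) (V : Type*) [AddCommGroup V]
    [Module K V] where
  π : (X → K) → Module.End K V
  σ : S → Module.End K V
  π_add : ∀ f ∈ LcSet K X, ∀ g ∈ LcSet K X, π (f + g) = π f + π g
  π_smul : ∀ (c : K), ∀ f ∈ LcSet K X, π (c • f) = c • π f
  π_mul : ∀ f ∈ LcSet K X, ∀ g ∈ LcSet K X, π (f * g) = π f * π g
  π_nondeg : Submodule.span K {ξ : V | ∃ f ∈ LcSet K X, ∃ η : V, ξ = π f η} = ⊤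
  σ_hom : ∀ s t : S, σ (s * t) = σ s * σ t
  covariant : ∀ s : S, ∀ f ∈ LcE K T (star s * s),
    π (barAlpha K T s f) = σ s * π f * σ (star s)
  essential : ∀ e : S, e * e = e →
    Submodule.span K {ξ : V | ∃ f ∈ LcE K T e, ∃ η : V, ξ = π f η} =
      LinearMap.range (σ e)


/-!
Everything rests on the intertwining relation `π(ᾱ_s h) σ_s = σ_s π(h)` for `h ∈ L_c(X_{s*s})`,
which is covariance combined with `π(h) σ_e = π(h)` for `h ∈ L_c(X_e)`. Writing
`f = ᾱ_s(ᾱ_{s*} f)` for `f ∈ B_s` it moves `σ_s` past `π(g)`, giving multiplicativity. For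
`s = t e` one has `s s* t = s`, which gives compatibility with the inclusions. For
non-degeneracy, cut `f ∈ L_c(X)` along a finite clopen cover by domains `X_a`; a piece `f_a`
supported in `X_a` satisfies `π(f_a) = π(f_a) σ_{a*} σ_a`, and `f_a ∈ B_{a*}`.
-/

namespace InverseSemigroup

variable {S : Type*} [InverseSemigroup S]

theorem star_mul_self_idem (s : S) : star s * s * (star s * s) = star s * s := by
  rw [← mul_assoc, star_mul_star]

theorem mul_star_self_idem (s : S) : s * star s * (s * star s) = s * star s := by
  rw [← mul_assoc, mul_star_mul]

theorem star_eq_of_idem {e : S} (he : e * e = e) : star e = e := by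
  have hstar : star e * star e = star e := by rw [← star_mul, he]
  have hcomm : e * star e = star e * e := idem_comm e (star e) he hstar
  have h₁ : e = e * star e := by
    calc e = e * (star e * e) := by rw [← mul_assoc, mul_star_mul]
      _ = e * star e := by rw [← hcomm, ← mul_assoc, he]
  have h₂ : star e = star e * e := by
    calc star e = star e * (e * star e) := by rw [← mul_assoc, star_mul_star]
      _ = star e * e := by rw [hcomm, ← mul_assoc, hstar]
  rw [h₂, ← hcomm, ← h₁]

theorem mul_star_mul_of_le {s t : S} (hst : ISle s t) : s * star s * t = s := by
  obtain ⟨e, he, rfl⟩ := hst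
  have hstar : star (t * e) = e * star t := by rw [star_mul, star_eq_of_idem he]
  calc t * e * star (t * e) * t = t * (e * e) * (star t * t) := by
        simp only [hstar, mul_assoc]
    _ = t * (star t * t) * e := by
        rw [he, mul_assoc, idem_comm e _ he (star_mul_self_idem t), ← mul_assoc]
    _ = t * e := by rw [← mul_assoc, mul_star_mul]

end InverseSemigroup

open InverseSemigroup

namespace AmpleSystem

variable {S X : Type*} [InverseSemigroup S] [TopologicalSpace X] (T : AmpleSystem S X)

theorem source_star (s : S) : (T.θ (star s)).source = (T.θ s).target :=
  (T.star_eq s).source_eq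

theorem target_star (s : S) : (T.θ (star s)).target = (T.θ s).source :=
  (T.star_eq s).target_eq

theorem isClopen_target (s : S) : IsClopen (T.θ s).target :=
  T.source_star s ▸ T.clopen (star s)

theorem symm_star_apply {s : S} {x : X} (hx : x ∈ (T.θ s).source) :
    (T.θ (star s)).symm x = T.θ s x :=
  (T.star_eq s).symm'.eqOn (by simpa [target_star] using hx)

theorem source_star_mul (s : S) : (T.θ (star s * s)).source = (T.θ s).source := by
  rw [(T.hom (star s) s).source_eq, PartialEquiv.trans_source, source_star]
  exact Set.inter_eq_left.2 fun x hx => (T.θ s).map_source hx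

theorem source_mul_star (s : S) : (T.θ (s * star s)).source = (T.θ s).target := by
  simpa only [InverseSemigroup.star_star, source_star] using T.source_star_mul (star s)

theorem source_eq_target_of_idem {e : S} (he : e * e = e) :
    (T.θ e).source = (T.θ e).target := by
  have h := (T.star_eq e).source_eq
  rw [star_eq_of_idem he] at h
  exact h

theorem apply_of_idem {e : S} (he : e * e = e) {x : X} (hx : x ∈ (T.θ e).source) :
    T.θ e x = x := by
  have hsq : T.θ e x = T.θ e (T.θ e x) := by
    have h := (T.hom e e).eqOn (x := x) (by rwa [he])
    rw [he] at h
    exact h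
  have hx' : T.θ e x ∈ (T.θ e).source := by
    rw [T.source_eq_target_of_idem he]
    exact (T.θ e).map_source hx
  calc T.θ e x = (T.θ e).symm (T.θ e (T.θ e x)) := ((T.θ e).left_inv hx').symm
    _ = x := by rw [← hsq, (T.θ e).left_inv hx]

theorem symm_apply_of_idem {e : S} (he : e * e = e) {x : X} (hx : x ∈ (T.θ e).target) :
    (T.θ e).symm x = x := by
  have hy : (T.θ e).symm x ∈ (T.θ e).source := (T.θ e).map_target hx
  calc (T.θ e).symm x = T.θ e ((T.θ e).symm x) := (T.apply_of_idem he hy).symm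
    _ = x := (T.θ e).right_inv hx

end AmpleSystem

theorem IsLocallyConstant.indicator_of_isClopen {X Y : Type*} [TopologicalSpace X] [Zero Y]
    {U : Set X} (hU : IsClopen U) {g : X → Y} (hg : IsLocallyConstant fun y : U => g y) :
    IsLocallyConstant (U.indicator g) := by
  refine (IsLocallyConstant.iff_exists_open _).2 fun x => ?_
  by_cases hx : x ∈ U
  · obtain ⟨W, hW, hxW, hWg⟩ := hg.exists_open ⟨x, hx⟩
    refine ⟨Subtype.val '' W, hU.isOpen.isOpenMap_subtype_val W hW, ⟨_, hxW, rfl⟩, ?_⟩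
    rintro _ ⟨y, hyW, rfl⟩
    rw [Set.indicator_of_mem y.2, Set.indicator_of_mem hx]
    exact hWg y hyW
  · exact ⟨Uᶜ, hU.compl.isOpen, hx, fun y hy => by
      rw [Set.indicator_of_notMem hy, Set.indicator_of_notMem hx]⟩

namespace LcSet

variable {K X : Type*} [Field K] [TopologicalSpace X]

theorem zero_mem : (0 : X → K) ∈ LcSet K X :=
  ⟨IsLocallyConstant.const 0, HasCompactSupport.zero⟩

theorem mul_mem {f g : X → K} (hf : f ∈ LcSet K X) (hg : g ∈ LcSet K X) :
    f * g ∈ LcSet K X :=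
  ⟨hf.1.mul hg.1, hf.2.mul_right⟩

theorem indicator_mem {U : Set X} (hU : IsClopen U) {f : X → K} (hf : f ∈ LcSet K X) :
    U.indicator f ∈ LcSet K X :=
  ⟨hf.1.comp_continuous continuous_subtype_val |>.indicator_of_isClopen hU,
    hf.2.mono (by rw [Set.support_indicator]; exact Set.inter_subset_right)⟩

theorem induction_on_clopen_cover {ι : Type*} {U : ι → Set X} (hU : ∀ i, IsClopen (U i))
    (hcover : ∀ x, ∃ i, x ∈ U i) {P : (X → K) → Prop} (zero : P 0)
    (add : ∀ f ∈ LcSet K X, ∀ g ∈ LcSet K X, P f → P g → P (f + g))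
    (piece : ∀ i, ∀ f ∈ LcSet K X, (∀ x ∉ U i, f x = 0) → P f)
    {f : X → K} (hf : f ∈ LcSet K X) : P f := by
  classical
  have key : ∀ F : Finset ι, ∀ f ∈ LcSet K X, Function.support f ⊆ ⋃ i ∈ F, U i → P f := by
    intro F
    induction F using Finset.induction_on with
    | empty =>
      intro f _ hsupp
      have hf0 : f = 0 := by simpa using hsupp
      exact hf0 ▸ zero
    | insert a F _ ih =>
      intro f hf hsupp
      rw [← Set.indicator_self_add_compl (U a) f]
      refine add _ (indicator_mem (hU a) hf) _ (indicator_mem (hU a).compl hf)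
        (piece a _ (indicator_mem (hU a) hf) fun x hx => Set.indicator_of_notMem hx f)
        (ih _ (indicator_mem (hU a).compl hf) ?_)
      rw [Set.support_indicator]
      rintro x ⟨hxa, hx⟩
      simpa [show x ∉ U a from hxa] using hsupp hx
  obtain ⟨F, hF⟩ := hf.2.elim_finite_subcover U (fun i => (hU i).isOpen)
    fun x _ => Set.mem_iUnion.2 (hcover x)
  exact key F f hf ((subset_tsupport f).trans hF)

end LcSet

section BarAlpha

variable {K S X : Type*} [Field K] [InverseSemigroup S] [TopologicalSpace X]
  (T : AmpleSystem S X)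

theorem barAlpha_mem_LcSet (s : S) {f : X → K} (hf : f ∈ LcSet K X)
    (hsupp : ∀ x ∉ (T.θ s).source, f x = 0) : barAlpha K T s f ∈ LcSet K X := by
  have htarget : IsClopen (T.θ s).target := T.isClopen_target s
  have hsymm : ContinuousOn (T.θ s).symm (T.θ s).target := (T.θ s).continuousOn_symm
  refine ⟨(hf.1.comp_continuous hsymm.domRestrict).indicator_of_isClopen htarget, ?_⟩
  let C : Set X := (T.θ s).target ∩ (T.θ s).symm ⁻¹' tsupport f
  have hC : IsClosed C :=
    hsymm.preimage_isClosed_of_isClosed htarget.isClosed (isClosed_tsupport f)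
  have htsupport : tsupport f ⊆ (T.θ s).source :=
    closure_minimal (fun x hx => by_contra fun hxs => hx (hsupp x hxs)) (T.clopen s).isClosed
  have hC_sub : C ⊆ T.θ s '' tsupport f := fun x hx =>
    ⟨(T.θ s).symm x, hx.2, (T.θ s).right_inv hx.1⟩
  refine HasCompactSupport.intro' ((hf.2.image_of_continuousOn
    ((T.θ s).continuousOn.mono htsupport)).of_isClosed_subset hC hC_sub) hC fun x hx => ?_
  by_cases hxt : x ∈ (T.θ s).target
  · rw [barAlpha, Set.indicator_of_mem hxt]
    exact image_eq_zero_of_notMem_tsupport fun h => hx ⟨hxt, h⟩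
  · exact Set.indicator_of_notMem hxt _

theorem barAlpha_mul (s : S) (f g : X → K) :
    barAlpha K T s (f * g) = barAlpha K T s f * barAlpha K T s g :=
  Set.indicator_mul _ _ _

theorem barAlpha_barAlpha_star {s : S} {f : X → K} (hsupp : ∀ x ∉ (T.θ s).target, f x = 0) :
    barAlpha K T s (barAlpha K T (star s) f) = f := by
  funext x
  by_cases hx : x ∈ (T.θ s).target
  · have hy : (T.θ s).symm x ∈ (T.θ (star s)).target := by
      rw [T.target_star]
      exact (T.θ s).map_target hx
    rw [barAlpha, barAlpha, Set.indicator_of_mem hx, Set.indicator_of_mem hy,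
      T.symm_star_apply ((T.θ s).map_target hx), (T.θ s).right_inv hx]
  · rw [barAlpha, Set.indicator_of_notMem hx, hsupp x hx]

theorem barAlpha_of_idem {e : S} (he : e * e = e) {f : X → K}
    (hsupp : ∀ x ∉ (T.θ e).source, f x = 0) : barAlpha K T e f = f := by
  funext x
  by_cases hx : x ∈ (T.θ e).target
  · rw [barAlpha, Set.indicator_of_mem hx, T.symm_apply_of_idem he hx]
  · rw [barAlpha, Set.indicator_of_notMem hx,
      hsupp x (T.source_eq_target_of_idem he ▸ hx)]

theorem barAlpha_star_mem_LcE {s : S} {f : X → K} (hf : f ∈ FibSet K T s) :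
    barAlpha K T (star s) f ∈ LcE K T (star s * s) := by
  refine ⟨barAlpha_mem_LcSet T (star s) hf.1 fun x hx => hf.2 x ?_, fun x hx => ?_⟩
  · rwa [T.source_star] at hx
  · rw [T.source_star_mul, ← T.target_star] at hx
    exact Set.indicator_of_notMem hx _

theorem mem_LcE_mul_star_of_mem_FibSet {s : S} {f : X → K} (hf : f ∈ FibSet K T s) :
    f ∈ LcE K T (s * star s) :=
  ⟨hf.1, by simpa only [T.source_mul_star] using hf.2⟩

end BarAlpha

namespace CovRep

variable {K S X : Type*} [Field K] [InverseSemigroup S] [TopologicalSpace X]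
  {T : AmpleSystem S X} {V : Type*} [AddCommGroup V] [Module K V] (ρ : CovRep K T V)

theorem π_zero : ρ.π 0 = 0 := by
  simpa using ρ.π_add 0 LcSet.zero_mem 0 LcSet.zero_mem

theorem π_mul_σ_of_idem {e : S} (he : e * e = e) {h : X → K} (hh : h ∈ LcE K T e) :
    ρ.π h * ρ.σ e = ρ.π h := by
  have hcov : ρ.π h = ρ.σ e * ρ.π h * ρ.σ e := by
    have := ρ.covariant e h (by rwa [star_eq_of_idem he, he])
    rwa [barAlpha_of_idem T he hh.2, star_eq_of_idem he] at this
  calc ρ.π h * ρ.σ e = ρ.σ e * ρ.π h * ρ.σ (e * e) := by rw [ρ.σ_hom, ← mul_assoc, ← hcov]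
    _ = ρ.π h := by rw [he, ← hcov]

theorem π_barAlpha_mul_σ {s : S} {h : X → K} (hh : h ∈ LcE K T (star s * s)) :
    ρ.π (barAlpha K T s h) * ρ.σ s = ρ.σ s * ρ.π h := by
  rw [ρ.covariant s h hh, mul_assoc, ← ρ.σ_hom, mul_assoc,
    ρ.π_mul_σ_of_idem (star_mul_self_idem s) hh]

theorem π_mul_σ_mul_π {s : S} {f g : X → K} (hf : f ∈ FibSet K T s) (hg : g ∈ LcSet K X) :
    ρ.π f * ρ.σ s * ρ.π g = ρ.π (f * barAlpha K T s g) * ρ.σ s := by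
  set f' := barAlpha K T (star s) f
  have hf' : f' ∈ LcE K T (star s * s) := barAlpha_star_mem_LcE T hf
  have hf'g : f' * g ∈ LcE K T (star s * s) :=
    ⟨LcSet.mul_mem hf'.1 hg, fun x hx => by simp [hf'.2 x hx]⟩
  calc ρ.π f * ρ.σ s * ρ.π g = ρ.σ s * ρ.π f' * ρ.π g := by
        rw [← ρ.π_barAlpha_mul_σ hf', barAlpha_barAlpha_star T hf.2]
    _ = ρ.σ s * ρ.π (f' * g) := by rw [mul_assoc, ρ.π_mul _ hf'.1 _ hg]
    _ = ρ.π (barAlpha K T s (f' * g)) * ρ.σ s := (ρ.π_barAlpha_mul_σ hf'g).symm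
    _ = ρ.π (f * barAlpha K T s g) * ρ.σ s := by
        rw [barAlpha_mul, barAlpha_barAlpha_star T hf.2]

theorem π_mul_barAlpha_mul_σ {s t : S} {f g : X → K} (hf : f ∈ FibSet K T s)
    (hg : g ∈ LcSet K X) :
    ρ.π (f * barAlpha K T s g) * ρ.σ (s * t) = ρ.π f * ρ.σ s * (ρ.π g * ρ.σ t) := by
  rw [ρ.σ_hom, ← mul_assoc, ← ρ.π_mul_σ_mul_π hf hg, mul_assoc]

theorem π_mul_σ_of_le {s t : S} (hst : ISle s t) {f : X → K} (hf : f ∈ FibSet K T s) :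
    ρ.π f * ρ.σ t = ρ.π f * ρ.σ s := by
  calc ρ.π f * ρ.σ t = ρ.π f * ρ.σ (s * star s) * ρ.σ t := by
        rw [ρ.π_mul_σ_of_idem (mul_star_self_idem s) (mem_LcE_mul_star_of_mem_FibSet T hf)]
    _ = ρ.π f * ρ.σ s := by rw [mul_assoc, ← ρ.σ_hom, mul_star_mul_of_le hst]

theorem π_apply_mem_span {a : S} {f : X → K} (hf : f ∈ LcSet K X)
    (hsupp : ∀ x ∉ (T.θ a).source, f x = 0) (η : V) :
    ρ.π f η ∈ Submodule.span K {ξ : V | ∃ (s : S), ∃ f ∈ FibSet K T s, ∃ η : V,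
      ξ = (ρ.π f * ρ.σ s) η} := by
  have hfib : f ∈ FibSet K T (star a) := ⟨hf, by simpa only [T.target_star] using hsupp⟩
  have hLcE : f ∈ LcE K T (star a * a) := ⟨hf, by simpa only [T.source_star_mul] using hsupp⟩
  refine Submodule.subset_span ⟨star a, f, hfib, ρ.σ a η, ?_⟩
  calc ρ.π f η = (ρ.π f * ρ.σ (star a * a)) η := by
        rw [ρ.π_mul_σ_of_idem (star_mul_self_idem a) hLcE]
    _ = (ρ.π f * ρ.σ (star a)) (ρ.σ a η) := by rw [ρ.σ_hom, ← mul_assoc]; rfl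

theorem span_π_mul_σ_eq_top :
    Submodule.span K {ξ : V | ∃ (s : S), ∃ f ∈ FibSet K T s, ∃ η : V,
      ξ = (ρ.π f * ρ.σ s) η} = ⊤ := by
  refine eq_top_iff.2 (ρ.π_nondeg ▸ Submodule.span_le.2 ?_)
  rintro _ ⟨f, hf, η, rfl⟩
  refine LcSet.induction_on_clopen_cover (U := fun a => (T.θ a).source) T.clopen T.cover
    (P := fun f => ∀ η, ρ.π f η ∈ _) (fun η => ?_) (fun f hf g hg hPf hPg η => ?_)
    (fun a f hf hsupp η => ρ.π_apply_mem_span hf hsupp η) hf η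
  · rw [ρ.π_zero]
    exact Submodule.zero_mem _
  · rw [ρ.π_add f hf g hg]
    exact Submodule.add_mem _ (hPf η) (hPg η)

end CovRep

/-- Integration.  If `(π, σ)` is a covariant representation of an
ample dynamical system on `V`, then the maps `π_s (f δ_s) := π(f) σ_s`
(for `f ∈ L_c(X_{s s*})`) form a non-degenerate representation of the
semi-direct product bundle `B^θ` on `V`: each `π_s` is linear (automatic from
the recorded linearity of `π`), multiplicativity
`π_{s t}(μ_{s,t}(f δ_s ⊗ g δ_t)) = π_s(f δ_s) π_t(g δ_t)` holds — where
`μ_{s,t}(f δ_s ⊗ g δ_t) = f · ᾱ_s(g) δ_{s t}` — the maps are compatible with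
the inclusions `j`, i.e. `π_t ∘ j_{t,s} = π_s` for `s ≤ t`, and the family is
non-degenerate. -/
theorem covrep_integration
    {K S X : Type*} [Field K] [InverseSemigroup S] [TopologicalSpace X]
    (T : AmpleSystem S X) {V : Type*} [AddCommGroup V] [Module K V]
    (ρ : CovRep K T V) :
    (∀ s t : S, ∀ f ∈ FibSet K T s, ∀ g ∈ FibSet K T t,
      ρ.π (f * barAlpha K T s g) * ρ.σ (s * t) =
        (ρ.π f * ρ.σ s) * (ρ.π g * ρ.σ t)) ∧
    (∀ s t : S, ISle s t → ∀ f ∈ FibSet K T s,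
      ρ.π f * ρ.σ t = ρ.π f * ρ.σ s) ∧
    Submodule.span K {ξ : V | ∃ (s : S), ∃ f ∈ FibSet K T s, ∃ η : V,
      ξ = (ρ.π f * ρ.σ s) η} = ⊤ :=
  ⟨fun _ _ _ hf _ hg => ρ.π_mul_barAlpha_mul_σ hf hg.1,
    fun _ _ hst _ hf => ρ.π_mul_σ_of_le hst hf,
    ρ.span_π_mul_σ_eq_top⟩
end

section
/- Let (θ, S, X) be an ample dynamical system and (π, σ) a covariant representation on V. Then for every s ∈ S and every f ∈ L_c(X), σ_s π(f) = π(ᾱ_s(f)) σ_s, where ᾱ_s(f) = α_s(f · 1_{X_{s*s}}). -/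
variable (K : Type*) [Field K]

variable {S X : Type*} [InverseSemigroup S] [TopologicalSpace X]

section AuxLemmas

variable {K S X : Type*} [Field K] [InverseSemigroup S] [TopologicalSpace X]

lemma star_idem {e : S} (he : e * e = e) : star e = e := by
  have ha : star e * star e = star e := by
    rw [← InverseSemigroup.star_mul, he]
  have comm : e * star e = star e * e :=
    InverseSemigroup.idem_comm e (star e) he ha
  have h1 : e = star e * e := by
    conv_lhs => rw [← InverseSemigroup.mul_star_mul e]
    rw [comm, mul_assoc, he]
  have h2 : star e = star e * e := by
    conv_lhs => rw [← InverseSemigroup.star_mul_star e]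
    rw [mul_assoc, comm, ← mul_assoc, ha]
  rw [h2]; exact h1.symm

lemma source_star_mul (T : AmpleSystem S X) (s : S) :
    (T.θ (star s * s)).source = (T.θ s).source := by
  have h := PartialEquiv.EqOnSource.source_eq (T.hom (star s) s)
  rw [PartialEquiv.trans_source] at h
  have h2 : (T.θ (star s)).source = (T.θ s).target := by
    have := PartialEquiv.EqOnSource.source_eq (T.star_eq s)
    simpa using this
  change (T.θ (star s * s)).source = _ at h
  rw [h]
  change (T.θ s).source ∩ (T.θ s) ⁻¹' (T.θ (star s)).source = _
  rw [h2]
  exact Set.inter_eq_left.mpr fun x hx => (T.θ s).map_source hx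

lemma theta_idem_apply (T : AmpleSystem S X) {e : S} (he : e * e = e)
    {x : X} (hx : x ∈ (T.θ e).source) : T.θ e x = x := by
  have h := T.hom e e
  rw [he] at h
  have hsrc := PartialEquiv.EqOnSource.source_eq h
  rw [PartialEquiv.trans_source] at hsrc
  change (T.θ e).source = (T.θ e).source ∩ (T.θ e) ⁻¹' (T.θ e).source at hsrc
  have hx2 : T.θ e x ∈ (T.θ e).source := (hsrc ▸ hx).2
  have heq := PartialEquiv.EqOnSource.eqOn h hx
  rw [PartialEquiv.trans_apply] at heq
  change T.θ e x = T.θ e (T.θ e x) at heq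
  exact ((T.θ e).injOn hx hx2 heq).symm

lemma target_idem (T : AmpleSystem S X) {e : S} (he : e * e = e) :
    (T.θ e).target = (T.θ e).source := by
  have h := T.star_eq e
  rw [star_idem he] at h
  have := PartialEquiv.EqOnSource.source_eq h
  simpa using this.symm

lemma theta_idem_symm (T : AmpleSystem S X) {e : S} (he : e * e = e)
    {x : X} (hx : x ∈ (T.θ e).target) : (T.θ e).symm x = x := by
  have h1 : (T.θ e).symm x ∈ (T.θ e).source := (T.θ e).map_target hx
  have h2 : T.θ e ((T.θ e).symm x) = x := (T.θ e).right_inv hx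
  rwa [theta_idem_apply T he h1] at h2

lemma support_clopen {f : X → K} (hf : f ∈ LcSet K X) :
    IsClopen (Function.support f) := by
  constructor
  · rw [← isOpen_compl_iff]
    have h : (Function.support f)ᶜ = f ⁻¹' {0} := by
      ext x; simp [Function.mem_support]
    rw [h]; exact hf.1 _
  · have h : Function.support f = f ⁻¹' ({0}ᶜ) := by
      ext x; simp [Function.mem_support]
    rw [h]; exact hf.1 _

lemma support_compact {f : X → K} (hf : f ∈ LcSet K X) :
    IsCompact (Function.support f) := by
  have h := hf.2
  rwa [HasCompactSupport, tsupport, (support_clopen hf).1.closure_eq] at h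

lemma lc_indicator_one {B : Set X} (hB : IsClopen B) :
    IsLocallyConstant (B.indicator fun _ => (1 : K)) := by
  classical
  intro s
  have h : (B.indicator fun _ => (1 : K)) ⁻¹' s =
      (if (1 : K) ∈ s then B else ∅) ∪ (if (0 : K) ∈ s then Bᶜ else ∅) := by
    ext x
    by_cases hx : x ∈ B <;>
      simp only [Set.mem_preimage, Set.indicator_of_mem, Set.indicator_of_notMem, hx] <;>
      split_ifs <;> simp_all
  rw [h]
  apply IsOpen.union <;> split_ifs <;>
    simp [hB.2, hB.1.isOpen_compl]

lemma indicator_one_mem {B : Set X} (hB : IsClopen B) (hBc : IsCompact B) :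
    B.indicator (fun _ => (1 : K)) ∈ LcSet K X := by
  refine ⟨lc_indicator_one hB, ?_⟩
  have hsub : tsupport (B.indicator fun _ => (1 : K)) ⊆ B :=
    closure_minimal Set.support_indicator_subset hB.1
  exact IsCompact.of_isClosed_subset hBc isClosed_closure hsub

lemma zero_mem_Lc : (0 : X → K) ∈ LcSet K X := by
  refine ⟨IsLocallyConstant.const 0, ?_⟩
  show IsCompact (tsupport (0 : X → K))
  have h : tsupport (0 : X → K) = ∅ := by simp [tsupport]
  rw [h]; exact isCompact_empty

lemma indicator_mem {A : Set X} (hA : IsClopen A) {f : X → K}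
    (hf : f ∈ LcSet K X) : A.indicator f ∈ LcSet K X := by
  constructor
  · have heq : A.indicator f = (A.indicator fun _ => (1 : K)) * f := by
      ext x; by_cases hx : x ∈ A <;> simp [Set.indicator, hx]
    rw [heq]
    exact (lc_indicator_one hA).mul hf.1
  · refine hf.2.mono fun x hx => ?_
    simp only [Function.mem_support] at hx ⊢
    intro hfx
    by_cases hxA : x ∈ A
    · exact hx (by rw [Set.indicator_of_mem hxA, hfx])
    · exact hx (Set.indicator_of_notMem hxA f)

lemma sub_mem_Lc {f g : X → K} (hf : f ∈ LcSet K X) (hg : g ∈ LcSet K X) :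
    f - g ∈ LcSet K X := by
  refine ⟨hf.1.sub hg.1, ?_⟩
  rw [sub_eq_add_neg]
  refine hf.2.add (hg.2.mono ?_)
  intro x hx
  simpa using hx

end AuxLemmas

section RepLemmas

variable {K S X : Type*} [Field K] [InverseSemigroup S] [TopologicalSpace X]
variable (T : AmpleSystem S X) {V : Type*} [AddCommGroup V] [Module K V]
variable (ρ : CovRep K T V)

lemma pi_zero : ρ.π 0 = 0 := by
  have h := ρ.π_smul (0 : K) 0 zero_mem_Lc
  rwa [zero_smul, zero_smul] at h

lemma zero_mem_LcE (e : S) : (0 : X → K) ∈ LcE K T e :=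
  ⟨zero_mem_Lc, fun _ _ => rfl⟩

lemma barAlpha_idem {e : S} (he : e * e = e) {k : X → K} (hk : k ∈ LcE K T e) :
    barAlpha K T e k = k := by
  funext x
  by_cases hx : x ∈ (T.θ e).target
  · rw [barAlpha, Set.indicator_of_mem hx, theta_idem_symm T he hx]
  · rw [barAlpha, Set.indicator_of_notMem hx]
    exact (hk.2 x (by rwa [← target_idem T he])).symm

lemma cov_idem {e : S} (he : e * e = e) {k : X → K} (hk : k ∈ LcE K T e) :
    ρ.π k = ρ.σ e * ρ.π k * ρ.σ e := by
  have hmem : k ∈ LcE K T (star e * e) := by rw [star_idem he, he]; exact hk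
  have h := ρ.covariant e k hmem
  rw [star_idem he, barAlpha_idem T he hk] at h
  exact h

lemma sigma_idem {e : S} (he : e * e = e) : ρ.σ e * ρ.σ e = ρ.σ e := by
  rw [← ρ.σ_hom, he]

lemma pi_mul_sigma {e : S} (he : e * e = e) {k : X → K} (hk : k ∈ LcE K T e) :
    ρ.π k * ρ.σ e = ρ.π k := by
  have h := cov_idem T ρ he hk
  calc ρ.π k * ρ.σ e = ρ.σ e * ρ.π k * (ρ.σ e * ρ.σ e) := by
        rw [← mul_assoc, ← h]
    _ = ρ.σ e * ρ.π k * ρ.σ e := by rw [sigma_idem T ρ he]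
    _ = ρ.π k := h.symm

lemma exists_unit {e : S} {k1 k2 : X → K} (hk1 : k1 ∈ LcE K T e)
    (hk2 : k2 ∈ LcE K T e) :
    ∃ k ∈ LcE K T e, k * k1 = k1 ∧ k * k2 = k2 := by
  set B := Function.support k1 ∪ Function.support k2 with hB
  have hBclopen : IsClopen B := (support_clopen hk1.1).union (support_clopen hk2.1)
  have hBcompact : IsCompact B := (support_compact hk1.1).union (support_compact hk2.1)
  refine ⟨B.indicator fun _ => 1, ⟨indicator_one_mem hBclopen hBcompact, ?_⟩, ?_, ?_⟩
  · intro x hx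
    have hxB : x ∉ B := by
      rintro (h1 | h2)
      · exact h1 (hk1.2 x hx)
      · exact h2 (hk2.2 x hx)
    exact Set.indicator_of_notMem hxB _
  · funext x
    by_cases hx : x ∈ B
    · rw [Pi.mul_apply, Set.indicator_of_mem hx, one_mul]
    · have h1 : k1 x = 0 := by
        by_contra h; exact hx (Or.inl h)
      rw [Pi.mul_apply, h1, mul_zero]
  · funext x
    by_cases hx : x ∈ B
    · rw [Pi.mul_apply, Set.indicator_of_mem hx, one_mul]
    · have h2 : k2 x = 0 := by
        by_contra h; exact hx (Or.inr h)
      rw [Pi.mul_apply, h2, mul_zero]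

lemma span_unit {e : S} {w : V}
    (hw : w ∈ Submodule.span K {ξ : V | ∃ f ∈ LcE K T e, ∃ η : V, ξ = ρ.π f η}) :
    ∃ k ∈ LcE K T e, ρ.π k w = w := by
  induction hw using Submodule.span_induction with
  | mem ξ hξ =>
    obtain ⟨g, hg, η, rfl⟩ := hξ
    obtain ⟨k, hk, hk1, -⟩ := exists_unit T hg hg
    exact ⟨k, hk, by
      rw [← Module.End.mul_apply, ← ρ.π_mul k hk.1 g hg.1, hk1]⟩
  | zero => exact ⟨0, zero_mem_LcE T e, map_zero _⟩
  | add x y hx hy ihx ihy =>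
    obtain ⟨k1, hk1, h1⟩ := ihx
    obtain ⟨k2, hk2, h2⟩ := ihy
    obtain ⟨k, hk, hkk1, hkk2⟩ := exists_unit T hk1 hk2
    refine ⟨k, hk, ?_⟩
    have e1 : ρ.π k x = x := by
      rw [← h1, ← Module.End.mul_apply, ← ρ.π_mul k hk.1 k1 hk1.1, hkk1]
    have e2 : ρ.π k y = y := by
      rw [← h2, ← Module.End.mul_apply, ← ρ.π_mul k hk.1 k2 hk2.1, hkk2]
    rw [map_add, e1, e2]
  | smul c x hx ihx =>
    obtain ⟨k, hk, h⟩ := ihx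
    exact ⟨k, hk, by rw [map_smul, h]⟩

lemma sigma_pi_vanish {e : S} (he : e * e = e) {g : X → K} (hg : g ∈ LcSet K X)
    (hg0 : ∀ x ∈ (T.θ e).source, g x = 0) : ρ.σ e * ρ.π g = 0 := by
  ext ξ
  rw [Module.End.mul_apply, LinearMap.zero_apply]
  have hw : ρ.σ e (ρ.π g ξ) ∈ LinearMap.range (ρ.σ e) := ⟨ρ.π g ξ, rfl⟩
  rw [← ρ.essential e he] at hw
  obtain ⟨k, hk, hkw⟩ := span_unit T ρ hw
  have hkg : k * g = 0 := by
    funext x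
    by_cases hx : x ∈ (T.θ e).source
    · rw [Pi.mul_apply, hg0 x hx, mul_zero]; rfl
    · rw [Pi.mul_apply, hk.2 x hx, zero_mul]; rfl
  have hzero : ρ.π k (ρ.σ e (ρ.π g ξ)) = 0 := by
    rw [← Module.End.mul_apply, pi_mul_sigma T ρ he hk, ← Module.End.mul_apply,
      ← ρ.π_mul k hk.1 g hg, hkg, pi_zero, LinearMap.zero_apply]
  rw [← hkw, hzero]

end RepLemmas

/-- If `(π, σ)` is a covariant representation of an ample
dynamical system on `V`, then for every `s ∈ S` and every `f ∈ L_c(X)`,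
`σ_s π(f) = π(ᾱ_s f) σ_s`, where `ᾱ_s(f) = α_s(f · 1_{X_{s*s}})`. -/
theorem covrep_sigma_commutation
    {K S X : Type*} [Field K] [InverseSemigroup S] [TopologicalSpace X]
    (T : AmpleSystem S X) {V : Type*} [AddCommGroup V] [Module K V]
    (ρ : CovRep K T V) (s : S) (f : X → K) (hf : f ∈ LcSet K X) :
    ρ.σ s * ρ.π f = ρ.π (barAlpha K T s f) * ρ.σ s := by
  have he : (star s * s) * (star s * s) = star s * s := by
    rw [mul_assoc, ← mul_assoc s, InverseSemigroup.mul_star_mul]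
  have hA : (T.θ (star s * s)).source = (T.θ s).source := source_star_mul T s
  set f1 := ((T.θ (star s * s)).source).indicator f with hf1def
  have hf1 : f1 ∈ LcSet K X := indicator_mem (T.clopen _) hf
  have hf1e : f1 ∈ LcE K T (star s * s) :=
    ⟨hf1, fun x hx => Set.indicator_of_notMem hx f⟩
  set f2 := f - f1 with hf2def
  have hf2 : f2 ∈ LcSet K X := sub_mem_Lc hf hf1
  have hf20 : ∀ x ∈ (T.θ (star s * s)).source, f2 x = 0 := by
    intro x hx
    simp [hf2def, hf1def, Set.indicator_of_mem hx]
  have hsum : f = f1 + f2 := by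
    funext x
    simp [hf2def]
  have hσs : ρ.σ s = ρ.σ s * ρ.σ (star s * s) := by
    rw [← ρ.σ_hom]
    congr 1
    rw [← mul_assoc, InverseSemigroup.mul_star_mul]
  have hzero : ρ.σ s * ρ.π f2 = 0 := by
    rw [hσs, mul_assoc, sigma_pi_vanish T ρ he hf2 hf20, mul_zero]
  have hbar : barAlpha K T s f = barAlpha K T s f1 := by
    funext x
    by_cases hx : x ∈ (T.θ s).target
    · rw [barAlpha, barAlpha, Set.indicator_of_mem hx, Set.indicator_of_mem hx]
      have hsx : (T.θ s).symm x ∈ (T.θ (star s * s)).source := by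
        rw [hA]; exact (T.θ s).map_target hx
      rw [hf1def, Set.indicator_of_mem hsx]
    · rw [barAlpha, barAlpha, Set.indicator_of_notMem hx, Set.indicator_of_notMem hx]
  have hcov := ρ.covariant s f1 hf1e
  have hπf : ρ.π f = ρ.π f1 + ρ.π f2 := by
    conv_lhs => rw [hsum]
    exact ρ.π_add f1 hf1 f2 hf2
  rw [hbar, hcov, hπf, mul_add, hzero, add_zero]
  rw [mul_assoc (ρ.σ s * ρ.π f1), ← ρ.σ_hom]
  rw [mul_assoc, pi_mul_sigma T ρ he hf1e]
end

section
/- Let M_x be the K-vector space with basis {δ_{[s]} : [s] ∈ L_x}, equipped with its right KG_x-module structure and the bilinear form ⟨δ_{[s]}, δ_{[t]}⟩ = δ_{[s*t]} if s*t ∈ G̃_x and 0 otherwise. If R_x ⊆ L_x is a total system of representatives of left G_x-classes, then for all m ∈ M_x, m = Σ_{[r] ∈ R_x} δ_{[r]} ⟨δ_{[r]}, m⟩, where only finitely many summands are nonzero. -/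
variable (K : Type*) [Field K]

variable {S X : Type*} [InverseSemigroup S] [TopologicalSpace X]

/-- The defining relations of the crossed product `L_c(X) ⋊ S`, imposed on the
free `K`-algebra on formal symbols `f δ_s` (`s ∈ S`, `f : X → K`): symbols with
`f ∉ L_c(X_{s s*})` are discarded, the symbols are `K`-linear in `f` on each
fiber, `(f δ_s)(g δ_t) = f ᾱ_s(g) δ_{s t}`, and `f δ_s = f δ_t` whenever
`s ≤ t` and `f ∈ L_c(X_{s s*})`.  The quotient is precisely the universal
(cross-sectional) algebra of the semi-direct product bundle `B^θ`. -/
inductive CPRel {S X : Type*} [InverseSemigroup S] [TopologicalSpace X]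
    (K : Type*) [Field K] (T : AmpleSystem S X) :
    FreeAlgebra K (S × (X → K)) → FreeAlgebra K (S × (X → K)) → Prop
  | zero (s : S) (f : X → K) : f ∉ FibSet K T s →
      CPRel K T (FreeAlgebra.ι K (s, f)) 0
  | add (s : S) (f g : X → K) : f ∈ FibSet K T s → g ∈ FibSet K T s →
      CPRel K T (FreeAlgebra.ι K (s, f + g))
        (FreeAlgebra.ι K (s, f) + FreeAlgebra.ι K (s, g))
  | smul (s : S) (c : K) (f : X → K) : f ∈ FibSet K T s →
      CPRel K T (FreeAlgebra.ι K (s, c • f)) (c • FreeAlgebra.ι K (s, f))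
  | mul (s t : S) (f g : X → K) : f ∈ FibSet K T s → g ∈ FibSet K T t →
      CPRel K T (FreeAlgebra.ι K (s, f) * FreeAlgebra.ι K (t, g))
        (FreeAlgebra.ι K (s * t, f * barAlpha K T s g))
  | incl (s t : S) (f : X → K) : ISle s t → f ∈ FibSet K T s →
      CPRel K T (FreeAlgebra.ι K (s, f)) (FreeAlgebra.ι K (t, f))

/-- The crossed product algebra `L_c(X) ⋊ S` of an ample dynamical system. -/
abbrev CP {S X : Type*} [InverseSemigroup S] [TopologicalSpace X]
    (K : Type*) [Field K] (T : AmpleSystem S X) :=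
  RingQuot (CPRel K T)

/-- The element `f Δ_s` of the crossed product `L_c(X) ⋊ S`. -/
noncomputable def Delta {S X : Type*} [InverseSemigroup S] [TopologicalSpace X]
    (K : Type*) [Field K] (T : AmpleSystem S X) (s : S) (f : X → K) :
    CP K T :=
  RingQuot.mkAlgHom K (CPRel K T) (FreeAlgebra.ι K (s, f))

section Germs

variable {S X : Type*} [InverseSemigroup S] [TopologicalSpace X]

/-- Germ equivalence at `x`: `s ~ t` iff `s e = t e` for some idempotent `e`
whose domain contains `x`. -/
def GermRel (T : AmpleSystem S X) (x : X) (s t : S) : Prop :=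
  ∃ e : S, e * e = e ∧ x ∈ (T.θ e).source ∧ s * e = t * e

/-- `L̃_x`: elements of `S` whose domain contains `x`. -/
def Lt (T : AmpleSystem S X) (x : X) : Type _ :=
  {s : S // x ∈ (T.θ s).source}

/-- `G̃_x`: elements of `S` whose domain contains `x` and which fix `x`. -/
def Gt (T : AmpleSystem S X) (x : X) : Type _ :=
  {s : S // x ∈ (T.θ s).source ∧ T.θ s x = x}

/-- `L_x`: the set of germs at `x` of elements of `L̃_x`. -/
def Lx (T : AmpleSystem S X) (x : X) : Type _ :=
  Quot (fun a b : Lt T x => GermRel T x a.1 b.1)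

/-- `G_x`: the isotropy group at `x`, as a quotient set of `G̃_x` by germ
equivalence. -/
def Gx (T : AmpleSystem S X) (x : X) : Type _ :=
  Quot (fun a b : Gt T x => GermRel T x a.1 b.1)

end Germs

section Germs2

variable {S X : Type*} [InverseSemigroup S] [TopologicalSpace X]

/-- Membership in `G̃_x` as a predicate on `S`. -/
def GtMem (T : AmpleSystem S X) (x : X) (s : S) : Prop :=
  x ∈ (T.θ s).source ∧ T.θ s x = x

/-- The germ class in `L_x` of an element of `L̃_x`. -/
def mkL (T : AmpleSystem S X) (x : X) (a : Lt T x) : Lx T x := Quot.mk _ a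

/-- The germ class in `G_x` of an element of `G̃_x`. -/
def mkG (T : AmpleSystem S X) (x : X) (a : Gt T x) : Gx T x := Quot.mk _ a

end Germs2

section Aux

variable {S X : Type*} [InverseSemigroup S] [TopologicalSpace X] (T : AmpleSystem S X)

lemma AS_source_mul (s t : S) :
    (T.θ (s * t)).source = (T.θ t).source ∩ (T.θ t) ⁻¹' (T.θ s).source := by
  have h := (T.hom s t).1
  rwa [PartialEquiv.trans_source] at h

lemma AS_apply_mul (s t : S) {y : X} (hy : y ∈ (T.θ (s * t)).source) :
    T.θ (s * t) y = T.θ s (T.θ t y) := by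
  have h := (T.hom s t).2 hy
  simpa using h

lemma AS_source_star (s : S) : (T.θ (star s)).source = (T.θ s).target := by
  have h := (T.star_eq s).1
  rwa [PartialEquiv.symm_source] at h

lemma AS_apply_star (s : S) {y : X} (hy : y ∈ (T.θ (star s)).source) :
    T.θ (star s) y = (T.θ s).symm y := by
  have h := (T.star_eq s).2 hy
  simpa using h

lemma AS_mem_source_star_mul {g : S} {y : X} (h : y ∈ (T.θ g).source) :
    y ∈ (T.θ (star g * g)).source := by
  rw [AS_source_mul]
  exact ⟨h, by rw [AS_source_star]; exact (T.θ g).map_source h⟩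

lemma AS_apply_star_mul {g : S} {y : X} (h : y ∈ (T.θ g).source) :
    T.θ (star g * g) y = y := by
  rw [AS_apply_mul T _ _ (AS_mem_source_star_mul T h),
    AS_apply_star T g (by rw [AS_source_star]; exact (T.θ g).map_source h)]
  exact (T.θ g).left_inv h

lemma IS_idem (r : S) : (r * star r) * (r * star r) = r * star r := by
  have h := InverseSemigroup.mul_star_mul r
  calc r * star r * (r * star r) = (r * star r * r) * star r := by
        simp [mul_assoc]
    _ = r * star r := by rw [h]

lemma IS_idem' (r : S) : (star r * r) * (star r * r) = star r * r := by
  have := IS_idem (star r)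
  rwa [InverseSemigroup.star_star] at this

/-- The key semigroup identity: `(r (r* a)) e = a e` for `e = (r* a)* (r* a)`. -/
lemma IS_key (r a : S) :
    (r * (star r * a)) * (star (star r * a) * (star r * a)) =
      a * (star (star r * a) * (star r * a)) := by
  have hc := InverseSemigroup.idem_comm (r * star r) (a * star a) (IS_idem r) (IS_idem a)
  rw [InverseSemigroup.star_mul, InverseSemigroup.star_star]
  have h1 : ∀ u v w : S, u * v * (w * u * v) = u * (v * w) * (u * v) := by
    intro u v w; simp [mul_assoc]
  calc r * (star r * a) * (star a * r * (star r * a))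
      = (r * star r) * ((a * star a) * ((r * star r) * a)) := by simp [mul_assoc]
    _ = ((r * star r) * (a * star a)) * ((r * star r) * a) := by simp [mul_assoc]
    _ = ((a * star a) * (r * star r)) * ((r * star r) * a) := by rw [hc]
    _ = (a * star a) * (((r * star r) * (r * star r)) * a) := by simp [mul_assoc]
    _ = (a * star a) * ((r * star r) * a) := by rw [IS_idem]
    _ = a * (star a * r * (star r * a)) := by simp [mul_assoc]

end Aux

/-- Let `M_x` be the `K`-vector space with basis
`{δ_[s] : [s] ∈ L_x}` (realized as `L_x →₀ K`), equipped with its right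
`K G_x`-module structure `act` (`δ_[s] · δ_[t] = δ_[s t]` for `[t] ∈ G_x`) and
the `K G_x`-valued bilinear form `p` with
`⟨δ_[s], δ_[t]⟩ = δ_[s* t]` if `s* t ∈ G̃_x` and `0` otherwise.  If
`R_x ⊆ L_x` is a total system of representatives of left `G_x`-classes, then
every `m ∈ M_x` satisfies `m = Σ_{[r] ∈ R_x} δ_[r] ⟨δ_[r], m⟩`, with only
finitely many nonzero summands. -/
theorem Mx_reconstruction
    {K S X : Type*} [Field K] [InverseSemigroup S] [TopologicalSpace X]
    (T : AmpleSystem S X) (x : X)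
    (p : (Lx T x →₀ K) →ₗ[K] (Lx T x →₀ K) →ₗ[K] (Gx T x →₀ K))
    (hp : ∀ a b : Lt T x,
      (∀ h : GtMem T x (star a.1 * b.1),
        p (Finsupp.single (mkL T x a) 1) (Finsupp.single (mkL T x b) 1) =
          Finsupp.single (mkG T x ⟨star a.1 * b.1, h⟩) 1) ∧
      (¬ GtMem T x (star a.1 * b.1) →
        p (Finsupp.single (mkL T x a) 1) (Finsupp.single (mkL T x b) 1) = 0))
    (act : (Lx T x →₀ K) →ₗ[K] (Gx T x →₀ K) →ₗ[K] (Lx T x →₀ K))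
    (hact : ∀ (a : Lt T x) (b : Gt T x) (h : x ∈ (T.θ (a.1 * b.1)).source),
      act (Finsupp.single (mkL T x a) 1) (Finsupp.single (mkG T x b) 1) =
        Finsupp.single (mkL T x (⟨a.1 * b.1, h⟩ : Lt T x)) 1)
    (R : Set (Lx T x))
    (hR : ∀ a : Lt T x, ∃! q : Lx T x, q ∈ R ∧
      ∃ r : Lt T x, mkL T x r = q ∧ T.θ r.1 x = T.θ a.1 x) :
    ∀ m : Lx T x →₀ K, ∃ F : Finset (Lx T x), ↑F ⊆ R ∧
      m = ∑ q ∈ F, act (Finsupp.single q 1) (p (Finsupp.single q 1) m) := by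
  classical
  have hout : ∀ ℓ : Lx T x, mkL T x (Quot.out ℓ) = ℓ := fun ℓ => Quot.out_eq ℓ
  -- key computation 1: matching representative reproduces the basis vector
  have key1 : ∀ (r a : Lt T x), T.θ r.1 x = T.θ a.1 x →
      act (Finsupp.single (mkL T x r) 1)
        (p (Finsupp.single (mkL T x r) 1) (Finsupp.single (mkL T x a) 1)) =
        Finsupp.single (mkL T x a) 1 := by
    intro r a hra
    have hsrc_a : x ∈ (T.θ a.1).source := a.2
    have hsrc_r : x ∈ (T.θ r.1).source := r.2
    have h1 : x ∈ (T.θ (star r.1 * a.1)).source := by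
      rw [AS_source_mul]
      refine ⟨hsrc_a, ?_⟩
      rw [Set.mem_preimage, AS_source_star, ← hra]
      exact (T.θ r.1).map_source hsrc_r
    have h2 : T.θ (star r.1 * a.1) x = x := by
      rw [AS_apply_mul T _ _ h1, ← hra,
        AS_apply_star T r.1 (by rw [AS_source_star]; exact (T.θ r.1).map_source hsrc_r)]
      exact (T.θ r.1).left_inv hsrc_r
    have hg : GtMem T x (star r.1 * a.1) := ⟨h1, h2⟩
    have h3 : x ∈ (T.θ (r.1 * (star r.1 * a.1))).source := by
      rw [AS_source_mul]
      exact ⟨h1, by rw [Set.mem_preimage, h2]; exact hsrc_r⟩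
    rw [(hp r a).1 hg, hact r ⟨star r.1 * a.1, hg⟩ h3]
    congr 1
    exact Quot.sound ⟨star (star r.1 * a.1) * (star r.1 * a.1), IS_idem' _,
      AS_mem_source_star_mul T h1, IS_key r.1 a.1⟩
  -- key computation 0: non-matching representative gives zero
  have key0 : ∀ (r a : Lt T x), T.θ r.1 x ≠ T.θ a.1 x →
      p (Finsupp.single (mkL T x r) 1) (Finsupp.single (mkL T x a) 1) = 0 := by
    intro r a hne
    refine (hp r a).2 (fun hg => absurd ?_ hne)
    have h2 := hg.2
    have hb : T.θ a.1 x ∈ (T.θ r.1).target := by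
      have h1 := hg.1
      rw [AS_source_mul] at h1
      have := h1.2
      rwa [Set.mem_preimage, AS_source_star] at this
    have h3 : (T.θ r.1).symm (T.θ a.1 x) = x := by
      rw [← AS_apply_star T r.1 (by rw [AS_source_star]; exact hb),
        ← AS_apply_mul T _ _ hg.1]
      exact h2
    calc T.θ r.1 x = T.θ r.1 ((T.θ r.1).symm (T.θ a.1 x)) := by rw [h3]
      _ = T.θ a.1 x := (T.θ r.1).right_inv hb
  intro m
  choose φ hφ1 hφ2 using fun ℓ : Lx T x => (hR (Quot.out ℓ)).exists
  refine ⟨m.support.image φ, ?_, ?_⟩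
  · intro q hq
    simp only [Finset.coe_image, Set.mem_image] at hq
    obtain ⟨ℓ, -, rfl⟩ := hq
    exact hφ1 ℓ
  · have hm : m = ∑ ℓ ∈ m.support, Finsupp.single ℓ (m ℓ) := by
      conv_lhs => rw [← Finsupp.sum_single m]
      rfl
    symm
    calc ∑ q ∈ m.support.image φ, act (Finsupp.single q 1) (p (Finsupp.single q 1) m)
        = ∑ q ∈ m.support.image φ, ∑ ℓ ∈ m.support,
            (m ℓ) • act (Finsupp.single q 1)
              (p (Finsupp.single q 1) (Finsupp.single ℓ 1)) := by
          refine Finset.sum_congr rfl fun q _ => ?_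
          conv_lhs => rw [hm]
          rw [map_sum, map_sum]
          refine Finset.sum_congr rfl fun ℓ _ => ?_
          have h : Finsupp.single ℓ (m ℓ) = (m ℓ) • Finsupp.single ℓ (1:K) := by
            rw [Finsupp.smul_single, smul_eq_mul, mul_one]
          rw [h, map_smul, map_smul]
      _ = ∑ ℓ ∈ m.support, ∑ q ∈ m.support.image φ,
            (m ℓ) • act (Finsupp.single q 1)
              (p (Finsupp.single q 1) (Finsupp.single ℓ 1)) := Finset.sum_comm
      _ = ∑ ℓ ∈ m.support, Finsupp.single ℓ (m ℓ) := by
          refine Finset.sum_congr rfl fun ℓ hℓ => ?_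
          rw [Finset.sum_eq_single_of_mem (φ ℓ) (Finset.mem_image_of_mem φ hℓ) ?_]
          · obtain ⟨r, hr1, hr2⟩ := hφ2 ℓ
            rw [← hr1, ← hout ℓ, key1 r (Quot.out ℓ) hr2, Finsupp.smul_single,
              smul_eq_mul, mul_one]
          · intro q hq hne
            obtain ⟨ℓ', -, rfl⟩ := Finset.mem_image.1 hq
            obtain ⟨r', hr'1, hr'2⟩ := hφ2 ℓ'
            have hne2 : T.θ r'.1 x ≠ T.θ (Quot.out ℓ).1 x := by
              intro heq
              exact hne ((hR (Quot.out ℓ)).unique ⟨hφ1 ℓ', r', hr'1, heq⟩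
                ⟨hφ1 ℓ, hφ2 ℓ⟩)
            rw [← hr'1, ← hout ℓ, key0 r' (Quot.out ℓ) hne2, map_zero, smul_zero]
      _ = m := hm.symm
end
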